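/- arXiv:2001.01908 — 2 statements merged into one kernel-verified Lean document; each statement's English description precedes it below -/
import Mathlib

section
/- For any integers q ≥ p ≥ 2, the orientation number of the complete tripartite graph K(2,p,q) equals 2 if and only if q ≤ C(p, ⌊p/2⌋). -/
/-- `hasPath D u v n`: there is a directed walk of length `n` from `u` to `v` in digraph `D`. -/
def hasPath {V : Type*} (D : V → V → Prop) (u v : V) : ℕ → Prop
  | 0 => u = v
  | n + 1 => ∃ w, D u w ∧ hasPath D w v n

/-- Directed distance in a digraph, `⊤` if unreachable. -/
noncomputable def ddist {V : Type*} (D : V → V → Prop) (u v : V) : ℕ∞ :=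
  sInf {n : ℕ∞ | ∃ m : ℕ, hasPath D u v m ∧ n = m}

/-- Diameter of a digraph. -/
noncomputable def ddiam (V : Type*) (D : V → V → Prop) : ℕ∞ :=
  ⨆ u : V, ⨆ v : V, ddist D u v

/-- `D` is an orientation of the simple graph `G`: every arc lies on an edge, and each
edge gets exactly one direction. -/
def IsOrientation {V : Type*} (G : SimpleGraph V) (D : V → V → Prop) : Prop :=
  (∀ u v, D u v → G.Adj u v) ∧ ∀ u v, G.Adj u v → (D u v ↔ ¬ D v u)

/-- A digraph is strong if every vertex can reach every other. -/
def IsStrong {V : Type*} (D : V → V → Prop) : Prop :=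
  ∀ u v : V, ∃ m : ℕ, hasPath D u v m

/-- The orientation number of a graph: minimum diameter over strong orientations. -/
noncomputable def orientationNumber {V : Type*} (G : SimpleGraph V) : ℕ∞ :=
  sInf {n : ℕ∞ | ∃ D : V → V → Prop, IsOrientation G D ∧ IsStrong D ∧ ddiam V D = n}

/-- The complete tripartite graph `K(a,b,c)`. -/
def Ktri (a b c : ℕ) : SimpleGraph (Σ i : Fin 3, Fin (![a, b, c] i)) :=
  SimpleGraph.completeMultipartiteGraph fun i => Fin (![a, b, c] i)

/-!
Let the parts of `K(2,p,q)` be `{a₀, a₁}`, `B` and `C`. In an orientation of diameter two,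
sort the vertices `c ∈ C` by which of `a₀`, `a₁` they point to. Two vertices of `C` in the same
class can only be joined by a path of length two through `B`, so within a class the
out-neighbourhoods `N⁺(c) ∩ B` are pairwise non-nested. A vertex pointing to both or to neither
of `a₀`, `a₁` has out-neighbourhood `∅` or `B`, so each of these classes has at most one
element; a vertex pointing to `a₀` only has `B \ N⁺(a₀) ⊆ N⁺(c) ∩ B ⊆ B \ N⁺(a₁)`, and
Sperner's theorem bounds that class. A case analysis on which classes occur gives
`q ≤ C(p, ⌊p/2⌋)`.

Conversely, orient `a₀ → B → a₁ → C → a₀` and `c_j → b_i` exactly when `i ∈ F_j`, for `q`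
distinct `⌊p/2⌋`-subsets `F_j` of `B` that separate every ordered pair of points of `B`: the `p`
cyclic intervals of length `⌊p/2⌋` already do, and there is room for `q - p` further sets.
-/

open Finset

section Distance

variable {V : Type*} {D : V → V → Prop} {u v : V}

theorem ddist_le_iff {k : ℕ} : ddist D u v ≤ k ↔ ∃ m ≤ k, hasPath D u v m := by
  constructor
  · intro h
    obtain ⟨_, ⟨m, hm, rfl⟩, hlt⟩ :=
      sInf_lt_iff.1 (h.trans_lt (by exact_mod_cast k.lt_succ_self : (k : ℕ∞) < (k + 1 : ℕ)))
    exact ⟨m, Nat.lt_succ_iff.1 (by exact_mod_cast hlt), hm⟩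
  · rintro ⟨m, hmk, hm⟩
    calc ddist D u v ≤ m := sInf_le ⟨m, hm, rfl⟩
      _ ≤ k := by exact_mod_cast hmk

theorem ddist_le_two_iff : ddist D u v ≤ 2 ↔ u = v ∨ D u v ∨ ∃ w, D u w ∧ D w v := by
  rw [← Nat.cast_ofNat, ddist_le_iff]
  constructor
  · rintro ⟨m, hm, hpath⟩
    interval_cases m
    · exact Or.inl hpath
    · obtain ⟨w, huw, rfl⟩ := hpath
      exact Or.inr (Or.inl huw)
    · obtain ⟨w, huw, w', hww', rfl⟩ := hpath
      exact Or.inr (Or.inr ⟨w, huw, hww'⟩)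
  · rintro (rfl | huv | ⟨w, huw, hwv⟩)
    exacts [⟨0, by norm_num, rfl⟩, ⟨1, by norm_num, v, huv, rfl⟩, ⟨2, le_rfl, w, huw, v, hwv, rfl⟩]

theorem exists_mid_of_ddist_le_two (h : ddist D u v ≤ 2) (hne : u ≠ v) (huv : ¬ D u v) :
    ∃ w, D u w ∧ D w v := by
  rcases ddist_le_two_iff.1 h with h | h | h
  exacts [(hne h).elim, (huv h).elim, h]

theorem ddist_le_ddiam : ddist D u v ≤ ddiam V D :=
  le_iSup₂ (f := fun u v => ddist D u v) u v

theorem IsOrientation.asymm {G : SimpleGraph V} (hD : IsOrientation G D) (h : D u v) : ¬ D v u :=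
  (hD.2 u v (hD.1 u v h)).1 h

theorem IsOrientation.two_le_ddist {G : SimpleGraph V} (hD : IsOrientation G D) (hne : u ≠ v)
    (hadj : ¬ G.Adj u v) : 2 ≤ ddist D u v := by
  refine le_sInf ?_
  rintro _ ⟨m, hm, rfl⟩
  match m, hm with
  | 0, hm => exact absurd hm hne
  | 1, ⟨w, hw, hwv⟩ => exact absurd (hwv ▸ hD.1 _ _ hw) hadj
  | n + 2, _ => exact_mod_cast le_add_self

theorem orientationNumber_eq_two_iff {G : SimpleGraph V} {u₀ v₀ : V} (hne : u₀ ≠ v₀)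
    (hadj : ¬ G.Adj u₀ v₀) :
    orientationNumber G = 2 ↔ ∃ D, IsOrientation G D ∧ ∀ u v, ddist D u v ≤ 2 := by
  constructor
  · intro h
    obtain ⟨_, ⟨D, hD, -, rfl⟩, hlt⟩ :=
      sInf_lt_iff.1 (h.trans_lt (by norm_num : (2 : ℕ∞) < 3))
    exact ⟨D, hD, fun u v => ddist_le_ddiam.trans (Order.le_of_lt_add_one hlt)⟩
  · rintro ⟨D, hD, h2⟩
    have hstrong : IsStrong D := fun u v =>
      let ⟨m, _, hm⟩ := ddist_le_iff.1 (h2 u v)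
      ⟨m, hm⟩
    refine le_antisymm (sInf_le_of_le ⟨D, hD, hstrong, rfl⟩ (iSup₂_le h2)) (le_sInf ?_)
    rintro _ ⟨D', hD', -, rfl⟩
    exact (hD'.two_le_ddist hne hadj).trans ddist_le_ddiam

end Distance

theorem Finset.card_le_choose_half_of_subset_imp_eq {ι α : Type*} [DecidableEq α] {s : Finset ι}
    {M : Finset α} {f : ι → Finset α} (hM : ∀ j ∈ s, f j ⊆ M)
    (hf : ∀ j ∈ s, ∀ j' ∈ s, f j ⊆ f j' → j = j') : #s ≤ (#M).choose (#M / 2) := by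
  set g : ι → Finset M := fun j => (f j).subtype (· ∈ M)
  have hg : ∀ j ∈ s, ∀ j' ∈ s, g j ⊆ g j' → j = j' := by
    refine fun j hj j' hj' hsub => hf j hj j' hj' fun i hi => ?_
    simpa [g] using hsub (mem_subtype.2 hi : (⟨i, hM j hj hi⟩ : M) ∈ g j)
  have hanti : IsAntichain (· ⊆ ·) (SetLike.coe (s.image g)) := by
    simp only [coe_image]
    rintro _ ⟨j, hj, rfl⟩ _ ⟨j', hj', rfl⟩ hne hsub
    exact hne (congrArg g (hg j hj j' hj' hsub))
  calc #s = #(s.image g) := (card_image_of_injOn fun j hj j' hj' h => hg j hj j' hj' h.subset).symm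
    _ ≤ _ := by simpa using hanti.sperner

theorem Nat.choose_half_le_choose_half {m n : ℕ} (h : m ≤ n) :
    m.choose (m / 2) ≤ n.choose (n / 2) :=
  (Nat.choose_le_choose _ h).trans (Nat.choose_le_middle _ _)

theorem Nat.two_le_choose_half {n : ℕ} (hn : 2 ≤ n) : 2 ≤ n.choose (n / 2) :=
  Nat.choose_half_le_choose_half hn

theorem Nat.choose_half_pred_add_one_le {n : ℕ} (hn : 2 ≤ n) :
    (n - 1).choose ((n - 1) / 2) + 1 ≤ n.choose (n / 2) := by
  obtain ⟨m, rfl⟩ : ∃ m, n = m + 1 := ⟨n - 1, by omega⟩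
  have := Nat.choose_pos (show m / 2 + 1 ≤ m by omega)
  calc m.choose (m / 2) + 1 ≤ m.choose (m / 2) + m.choose (m / 2 + 1) := by omega
    _ = (m + 1).choose (m / 2 + 1) := (Nat.choose_succ_succ' _ _).symm
    _ ≤ _ := Nat.choose_le_middle _ _

/-- The trace of a diameter-two orientation of `K(2,p,q)` with parts `{a₀, a₁}`, `B`, `C`,
the vertices of `B` and `C` being indexed by `β` and `ι`: `P₀`, `P₁` and `S j` are the
out-neighbourhoods in `B` of `a₀`, `a₁` and `c_j`, and `t₀ j`, `t₁ j` say that `c_j → a₀`,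
`c_j → a₁`. Each field is the existence of a path of length at most two between two vertices.
We call `c_j` *mixed* if it points to exactly one of `a₀`, `a₁`, and *extreme* otherwise. -/
structure IsDiamTwoProfile {ι β : Type*} (P₀ P₁ : Finset β) (t₀ t₁ : ι → Prop)
    (S : ι → Finset β) : Prop where
  c_reach_c : ∀ j j', j ≠ j' → (∃ i ∈ S j, i ∉ S j') ∨ (t₀ j ∧ ¬ t₀ j') ∨ (t₁ j ∧ ¬ t₁ j')
  a₀_reach_c : ∀ j, t₀ j → ∃ i ∈ P₀, i ∉ S j
  a₁_reach_c : ∀ j, t₁ j → ∃ i ∈ P₁, i ∉ S j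
  c_reach_a₀ : ∀ j, ¬ t₀ j → ∃ i ∈ S j, i ∉ P₀
  c_reach_a₁ : ∀ j, ¬ t₁ j → ∃ i ∈ S j, i ∉ P₁
  b_reach_c : ∀ j, ∀ i ∈ S j, (¬ t₀ j ∧ i ∉ P₀) ∨ (¬ t₁ j ∧ i ∉ P₁)
  c_reach_b : ∀ j i, i ∉ S j → (t₀ j ∧ i ∈ P₀) ∨ (t₁ j ∧ i ∈ P₁)

namespace IsDiamTwoProfile

variable {ι β : Type*} {P₀ P₁ : Finset β} {t₀ t₁ : ι → Prop} {S : ι → Finset β}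
  {j j' j₀ : ι}

theorem swap (h : IsDiamTwoProfile P₀ P₁ t₀ t₁ S) : IsDiamTwoProfile P₁ P₀ t₁ t₀ S where
  c_reach_c j j' hne := (h.c_reach_c j j' hne).imp_right Or.symm
  a₀_reach_c := h.a₁_reach_c
  a₁_reach_c := h.a₀_reach_c
  c_reach_a₀ := h.c_reach_a₁
  c_reach_a₁ := h.c_reach_a₀
  b_reach_c j i hi := (h.b_reach_c j i hi).symm
  c_reach_b j i hi := (h.c_reach_b j i hi).symm

theorem eq_of_S_subset (h : IsDiamTwoProfile P₀ P₁ t₀ t₁ S) (h₀ : t₀ j ↔ t₀ j')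
    (h₁ : t₁ j ↔ t₁ j') (hS : S j ⊆ S j') : j = j' := by
  by_contra hne
  rcases h.c_reach_c j j' hne with ⟨i, hi, hi'⟩ | ⟨hj, hj'⟩ | ⟨hj, hj'⟩
  exacts [hi' (hS hi), hj' (h₀.1 hj), hj' (h₁.1 hj)]

theorem S_eq_empty (h : IsDiamTwoProfile P₀ P₁ t₀ t₁ S) (h₀ : t₀ j) (h₁ : t₁ j) : S j = ∅ :=
  eq_empty_of_forall_notMem fun i hi => by
    rcases h.b_reach_c j i hi with ⟨hj, -⟩ | ⟨hj, -⟩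
    exacts [hj h₀, hj h₁]

theorem exists_notMem_sdiff (h : IsDiamTwoProfile P₀ P₁ t₀ t₁ S) [DecidableEq β]
    (hj : t₀ j ↔ t₁ j) : ∃ i, i ∉ P₀ \ P₁ := by
  by_cases h₀ : t₀ j
  · obtain ⟨i, hi, -⟩ := h.a₁_reach_c j (hj.1 h₀)
    exact ⟨i, fun hi' => (mem_sdiff.1 hi').2 hi⟩
  · obtain ⟨i, -, hi⟩ := h.c_reach_a₀ j h₀
    exact ⟨i, fun hi' => hi (mem_sdiff.1 hi').1⟩

section Fintype

variable [Fintype β]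

theorem S_eq_univ (h : IsDiamTwoProfile P₀ P₁ t₀ t₁ S) (h₀ : ¬ t₀ j) (h₁ : ¬ t₁ j) :
    S j = univ :=
  eq_univ_of_forall fun i => by_contra fun hi => by
    rcases h.c_reach_b j i hi with ⟨hj, -⟩ | ⟨hj, -⟩
    exacts [h₀ hj, h₁ hj]

theorem disjoint_P (h : IsDiamTwoProfile P₀ P₁ t₀ t₁ S) (h₀ : ¬ t₀ j) (h₁ : ¬ t₁ j) :
    Disjoint P₀ P₁ :=
  disjoint_left.2 fun i hi₀ hi₁ => by
    rcases h.b_reach_c j i (h.S_eq_univ h₀ h₁ ▸ mem_univ i) with ⟨-, hi⟩ | ⟨-, hi⟩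
    exacts [hi hi₀, hi hi₁]

theorem eq_of_extreme (h : IsDiamTwoProfile P₀ P₁ t₀ t₁ S) (hj : t₀ j ↔ t₁ j)
    (hj' : t₀ j' ↔ t₁ j') (h₀ : t₀ j ↔ t₀ j') : j = j' := by
  refine h.eq_of_S_subset h₀ (hj.symm.trans (h₀.trans hj')) ?_
  by_cases hj₀ : t₀ j
  · simp [h.S_eq_empty hj₀ (hj.1 hj₀)]
  · simp [h.S_eq_univ (mt h₀.2 hj₀) (mt hj'.2 (mt h₀.2 hj₀))]

variable [DecidableEq β]

theorem compl_subset_S (h : IsDiamTwoProfile P₀ P₁ t₀ t₁ S) (h₁ : ¬ t₁ j) : P₀ᶜ ⊆ S j :=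
  fun i hi => by_contra fun hiS => by
    rcases h.c_reach_b j i hiS with ⟨-, hiP⟩ | ⟨hj, -⟩
    exacts [mem_compl.1 hi hiP, h₁ hj]

theorem S_subset_compl (h : IsDiamTwoProfile P₀ P₁ t₀ t₁ S) (h₀ : t₀ j) : S j ⊆ P₁ᶜ :=
  fun i hi => by
    rcases h.b_reach_c j i hi with ⟨hj, -⟩ | ⟨-, hiP⟩
    exacts [(hj h₀).elim, mem_compl.2 hiP]

theorem P₁_subset_P₀ (h : IsDiamTwoProfile P₀ P₁ t₀ t₁ S) (h₀ : t₀ j) (h₁ : ¬ t₁ j) : P₁ ⊆ P₀ :=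
  compl_subset_compl.1 ((h.compl_subset_S h₁).trans (h.S_subset_compl h₀))

theorem P_union_eq_univ (h : IsDiamTwoProfile P₀ P₁ t₀ t₁ S) (h₀ : t₀ j) (h₁ : t₁ j) :
    P₀ ∪ P₁ = univ :=
  eq_univ_of_forall fun i => by
    rcases h.c_reach_b j i (h.S_eq_empty h₀ h₁ ▸ notMem_empty i) with ⟨-, hi⟩ | ⟨-, hi⟩
    exacts [mem_union_left _ hi, mem_union_right _ hi]

theorem eq_of_extreme_of_mixed (h : IsDiamTwoProfile P₀ P₁ t₀ t₁ S) (hm : t₀ j₀ ∧ ¬ t₁ j₀)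
    (hj : t₀ j ↔ t₁ j) (hj' : t₀ j' ↔ t₁ j') : j = j' := by
  have same_type : ∀ {k k'}, (t₀ k ↔ t₁ k) → (t₀ k' ↔ t₁ k') → t₀ k → t₀ k' :=
    fun hk hk' h₀ => by_contra fun h₀' => by
      obtain ⟨i, hi, -⟩ := h.a₁_reach_c _ (hk.1 h₀)
      exact disjoint_left.1 (h.disjoint_P h₀' (mt hk'.2 h₀')) (h.P₁_subset_P₀ hm.1 hm.2 hi) hi
  exact h.eq_of_extreme hj hj' ⟨same_type hj hj', same_type hj' hj⟩

theorem card_le_of_forall_mixed (h : IsDiamTwoProfile P₀ P₁ t₀ t₁ S) (s : Finset ι)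
    (hs : ∀ j ∈ s, t₀ j ∧ ¬ t₁ j) : #s ≤ (#(P₀ \ P₁)).choose (#(P₀ \ P₁) / 2) := by
  refine card_le_choose_half_of_subset_imp_eq (f := fun j => S j ∩ P₀) ?_ ?_
  · intro j hj i hi
    have hi := mem_inter.1 hi
    exact mem_sdiff.2 ⟨hi.2, mem_compl.1 (h.S_subset_compl (hs j hj).1 hi.1)⟩
  · intro j hj j' hj' hsub
    refine h.eq_of_S_subset (iff_of_true (hs j hj).1 (hs j' hj').1)
      (iff_of_false (hs j hj).2 (hs j' hj').2) fun i hi => ?_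
    by_cases hi₀ : i ∈ P₀
    · exact (mem_inter.1 (hsub (mem_inter.2 ⟨hi, hi₀⟩))).1
    · exact h.compl_subset_S (hs j' hj').2 (mem_compl.2 hi₀)

end Fintype

section Card

variable [Fintype ι] [Fintype β]

theorem card_le_two (h : IsDiamTwoProfile P₀ P₁ t₀ t₁ S) (hj : t₀ j ∧ ¬ t₁ j)
    (hj' : t₁ j' ∧ ¬ t₀ j') : Fintype.card ι ≤ 2 := by
  classical
  obtain rfl : P₀ = P₁ := (h.swap.P₁_subset_P₀ hj'.1 hj'.2).antisymm (h.P₁_subset_P₀ hj.1 hj.2)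
  have mixed : ∀ k, ¬ (t₀ k ↔ t₁ k) := by
    intro k hk
    by_cases h₀ : t₀ k
    · obtain ⟨i, -, hi⟩ := h.c_reach_a₁ j hj.2
      have huniv := h.P_union_eq_univ h₀ (hk.1 h₀)
      rw [union_self] at huniv
      exact hi (huniv ▸ mem_univ i)
    · obtain ⟨i, hi, -⟩ := h.a₀_reach_c j hj.1
      exact disjoint_left.1 (h.disjoint_P h₀ (mt hk.2 h₀)) hi hi
  have hS : ∀ k, S k = P₀ᶜ := fun k => by
    by_cases h₀ : t₀ k
    · have h₁ : ¬ t₁ k := fun h₁ => mixed k (iff_of_true h₀ h₁)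
      exact (h.S_subset_compl h₀).antisymm (h.compl_subset_S h₁)
    · have h₁ : t₁ k := by_contra fun h₁ => mixed k (iff_of_false h₀ h₁)
      exact (h.swap.S_subset_compl h₁).antisymm (h.swap.compl_subset_S h₀)
  have hinj : Function.Injective fun k => decide (t₀ k) := fun k k' hkk' => by
    have h₀ : t₀ k ↔ t₀ k' := by simpa using hkk'
    have h₁ : t₁ k ↔ t₁ k' := by have := mixed k; have := mixed k'; tauto
    exact h.eq_of_S_subset h₀ h₁ (hS k ▸ hS k' ▸ subset_rfl)
  simpa using Fintype.card_le_of_injective _ hinj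

theorem card_le_of_forall_imp (h : IsDiamTwoProfile P₀ P₁ t₀ t₁ S) (hβ : 2 ≤ Fintype.card β)
    (h₁₀ : ∀ j, t₁ j → t₀ j) :
    Fintype.card ι ≤ (Fintype.card β).choose (Fintype.card β / 2) := by
  classical
  set M := univ.filter fun j => t₀ j ∧ ¬ t₁ j
  set E := univ.filter fun j => ¬ (t₀ j ∧ ¬ t₁ j)
  have hE : ∀ j ∈ E, t₀ j ↔ t₁ j := fun j hj =>
    ⟨fun h₀ => by_contra fun h₁ => (mem_filter.1 hj).2 ⟨h₀, h₁⟩, h₁₀ j⟩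
  have hcard : #M + #E = Fintype.card ι := card_filter_add_card_filter_not _
  rcases M.eq_empty_or_nonempty with hM | ⟨j₀, hj₀⟩
  · have hE2 : #E ≤ 2 := by
      simpa using card_le_card_of_injOn (t := univ) (fun j => decide (t₀ j))
        (fun _ _ => mem_univ _)
        fun j hj j' hj' hjj' => h.eq_of_extreme (hE j hj) (hE j' hj') (by simpa using hjj')
    have := Nat.two_le_choose_half hβ
    rw [hM, card_empty] at hcard
    omega
  have hM := h.card_le_of_forall_mixed M fun j hj => (mem_filter.1 hj).2
  rcases E.eq_empty_or_nonempty with hE0 | ⟨j, hj⟩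
  · have := Nat.choose_half_le_choose_half (card_le_univ (P₀ \ P₁))
    rw [hE0, card_empty] at hcard
    omega
  · have hE1 : #E ≤ 1 := card_le_one.2 fun k hk k' hk' =>
      h.eq_of_extreme_of_mixed (mem_filter.1 hj₀).2 (hE k hk) (hE k' hk')
    obtain ⟨i, hi⟩ := h.exists_notMem_sdiff (hE j hj)
    have := Nat.choose_half_le_choose_half (Nat.le_sub_one_of_lt (card_lt_univ_of_notMem hi))
    have := Nat.choose_half_pred_add_one_le hβ
    omega

theorem card_le (h : IsDiamTwoProfile P₀ P₁ t₀ t₁ S) (hβ : 2 ≤ Fintype.card β) :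
    Fintype.card ι ≤ (Fintype.card β).choose (Fintype.card β / 2) := by
  by_cases hFT : ∃ j, t₁ j ∧ ¬ t₀ j
  · by_cases hTF : ∃ j, t₀ j ∧ ¬ t₁ j
    · obtain ⟨j, hj⟩ := hTF
      obtain ⟨j', hj'⟩ := hFT
      exact (h.card_le_two hj hj').trans (Nat.two_le_choose_half hβ)
    · exact h.swap.card_le_of_forall_imp hβ fun j h₀ => by_contra fun h₁ => hTF ⟨j, h₀, h₁⟩
  · exact h.card_le_of_forall_imp hβ fun j h₁ => by_contra fun h₀ => hFT ⟨j, h₁, h₀⟩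

end Card

end IsDiamTwoProfile

structure IsSeparatingAntichain {ι α : Type*} (f : ι → Finset α) : Prop where
  eq_of_subset : ∀ j j', f j ⊆ f j' → j = j'
  separates : ∀ i i', i ≠ i' → ∃ j, i' ∈ f j ∧ i ∉ f j

namespace IsSeparatingAntichain

variable {ι α : Type*} {f : ι → Finset α}

theorem exists_mem [Nontrivial ι] (hf : IsSeparatingAntichain f) (j : ι) : ∃ i, i ∈ f j := by
  obtain ⟨j', hj'⟩ := exists_ne j
  by_contra! h
  exact hj' (hf.eq_of_subset j j' fun i hi => (h i hi).elim).symm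

theorem exists_notMem [Nontrivial ι] (hf : IsSeparatingAntichain f) (j : ι) : ∃ i, i ∉ f j := by
  obtain ⟨j', hj'⟩ := exists_ne j
  by_contra! h
  exact hj' (hf.eq_of_subset j' j fun i _ => h i)

theorem exists_mem_index [Nontrivial α] (hf : IsSeparatingAntichain f) (i : α) :
    ∃ j, i ∈ f j :=
  let ⟨i', hi'⟩ := exists_ne i
  (hf.separates i' i hi').imp fun _ => And.left

theorem exists_notMem_index [Nontrivial α] (hf : IsSeparatingAntichain f) (i : α) :
    ∃ j, i ∉ f j :=
  let ⟨i', hi'⟩ := exists_ne i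
  (hf.separates i i' hi'.symm).imp fun _ => And.right

end IsSeparatingAntichain

section CyclicInterval

variable {p k : ℕ}

def cyclicInterval (k : ℕ) (m : Fin p) : Finset (Fin p) :=
  (univ.filter fun t : Fin p => t.val < k).map (addLeftEmbedding m)

theorem mem_cyclicInterval [NeZero p] {m i : Fin p} : i ∈ cyclicInterval k m ↔ (i - m).val < k := by
  simp only [cyclicInterval, mem_map, mem_filter, mem_univ, true_and, addLeftEmbedding_apply]
  constructor
  · rintro ⟨t, ht, rfl⟩
    rwa [add_sub_cancel_left]
  · exact fun h => ⟨i - m, h, add_sub_cancel m i⟩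

theorem card_cyclicInterval (hk : k ≤ p) (m : Fin p) : #(cyclicInterval k m) = k := by
  simp [cyclicInterval, Fin.card_filter_val_lt, hk]

theorem exists_cyclicInterval_separating [NeZero p] (hk : 0 < k) (hkp : k < p) {i i' : Fin p}
    (h : i ≠ i') : ∃ m, i' ∈ cyclicInterval k m ∧ i ∉ cyclicInterval k m := by
  obtain ⟨d, hd_eq⟩ : ∃ d, d = i - i' := ⟨_, rfl⟩
  have hd : d.val ≠ 0 := fun h0 => h (sub_eq_zero.1 (hd_eq ▸ Fin.ext (by simpa using h0)))
  have hdp := d.isLt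
  -- from the start `i' - s`, the offset of `i'` is `k - d < k` and that of `i` is `max d k`
  set s : Fin p := ⟨k - d.val, by omega⟩
  refine ⟨i' - s, ?_, ?_⟩
  · rw [mem_cyclicInterval, sub_sub_cancel]
    show k - d.val < k
    omega
  · rw [mem_cyclicInterval, show i - (i' - s) = d + s by rw [hd_eq]; abel, Fin.val_add,
      Nat.mod_eq_of_lt (show d.val + (k - d.val) < p by omega)]
    show ¬ d.val + (k - d.val) < k
    omega

end CyclicInterval

theorem exists_separating_antichain {p q k : ℕ} (hk : 0 < k) (hkp : k < p) (hpq : p ≤ q)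
    (hq : q ≤ p.choose k) :
    ∃ f : Fin q → Finset (Fin p), IsSeparatingAntichain f := by
  have : NeZero p := ⟨by omega⟩
  have hintervals : univ.image (cyclicInterval k) ⊆ powersetCard k (univ : Finset (Fin p)) :=
    image_subset_iff.2 fun m _ =>
      mem_powersetCard.2 ⟨subset_univ _, card_cyclicInterval hkp.le m⟩
  obtain ⟨𝒰, hI𝒰, h𝒰, hcard⟩ := exists_subsuperset_card_eq hintervals
    (card_image_le.trans (by simpa using hpq)) (by simpa using hq)
  set e := (𝒰.equivFinOfCardEq hcard).symm
  have hcard_e : ∀ j, #(e j : Finset (Fin p)) = k := fun j => (mem_powersetCard.1 (h𝒰 (e j).2)).2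
  refine ⟨fun j => e j, ⟨fun j j' hsub => e.injective (Subtype.ext ?_), fun i i' hii' => ?_⟩⟩
  · exact eq_of_subset_of_card_le hsub (by rw [hcard_e, hcard_e])
  · obtain ⟨m, hm⟩ := exists_cyclicInterval_separating hk hkp hii'
    have hmem : cyclicInterval k m ∈ 𝒰 := hI𝒰 (mem_image_of_mem _ (mem_univ m))
    exact ⟨e.symm ⟨_, hmem⟩, by simpa using hm⟩

namespace K2pq

variable {p q : ℕ}

abbrev Vert (p q : ℕ) := Σ i : Fin 3, Fin (![2, p, q] i)

def a (x : Fin 2) : Vert p q := ⟨0, x⟩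

def b (i : Fin p) : Vert p q := ⟨1, i⟩

def c (j : Fin q) : Vert p q := ⟨2, j⟩

@[elab_as_elim]
theorem Vert.cases {motive : Vert p q → Prop} (ha : ∀ x, motive (a x)) (hb : ∀ i, motive (b i))
    (hc : ∀ j, motive (c j)) : ∀ v, motive v
  | ⟨0, x⟩ => ha x
  | ⟨1, i⟩ => hb i
  | ⟨2, j⟩ => hc j

theorem c_injective : Function.Injective (c : Fin q → Vert p q) :=
  fun _ _ h => eq_of_heq (Sigma.mk.inj h).2

theorem a_zero_ne_a_one : (a 0 : Vert p q) ≠ a 1 :=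
  fun h => absurd (eq_of_heq (Sigma.mk.inj h).2) (by decide : (0 : Fin 2) ≠ 1)

theorem not_adj_a_zero_a_one : ¬ (Ktri 2 p q).Adj (a 0) (a 1) := fun h => h rfl

section Extraction

variable {D : Vert p q → Vert p q → Prop}

theorem fst_ne_of_arc (hD : IsOrientation (Ktri 2 p q) D) {u v : Vert p q} (h : D u v) :
    u.1 ≠ v.1 :=
  hD.1 u v h

open Classical in
noncomputable def outB (D : Vert p q → Vert p q → Prop) (v : Vert p q) : Finset (Fin p) :=
  univ.filter fun i => D v (b i)

theorem mem_outB {v : Vert p q} {i : Fin p} : i ∈ outB D v ↔ D v (b i) := by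
  simp [outB]

theorem c_reach_c (hD : IsOrientation (Ktri 2 p q) D) {j j' : Fin q}
    (hdist : ddist D (c j) (c j') ≤ 2) (hne : j ≠ j') :
    (∃ i ∈ outB D (c j), i ∉ outB D (c j')) ∨ ∃ x, D (c j) (a x) ∧ ¬ D (c j') (a x) := by
  obtain ⟨w, h₁, h₂⟩ := exists_mid_of_ddist_le_two hdist (c_injective.ne hne)
    (fun h => fst_ne_of_arc hD h rfl)
  induction w using Vert.cases with
  | ha x => exact .inr ⟨x, h₁, hD.asymm h₂⟩
  | hb i => exact .inl ⟨i, mem_outB.2 h₁, fun h => hD.asymm h₂ (mem_outB.1 h)⟩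
  | hc _ => exact (fst_ne_of_arc hD h₁ rfl).elim

theorem a_reach_c (hD : IsOrientation (Ktri 2 p q) D) {x : Fin 2} {j : Fin q}
    (hdist : ddist D (a x) (c j) ≤ 2) (h : D (c j) (a x)) :
    ∃ i ∈ outB D (a x), i ∉ outB D (c j) := by
  obtain ⟨w, h₁, h₂⟩ := exists_mid_of_ddist_le_two hdist
    (ne_of_apply_ne Sigma.fst (by simp [a, c])) (hD.asymm h)
  induction w using Vert.cases with
  | ha _ => exact (fst_ne_of_arc hD h₁ rfl).elim
  | hb i => exact ⟨i, mem_outB.2 h₁, fun h => hD.asymm h₂ (mem_outB.1 h)⟩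
  | hc _ => exact (fst_ne_of_arc hD h₂ rfl).elim

theorem c_reach_a (hD : IsOrientation (Ktri 2 p q) D) {x : Fin 2} {j : Fin q}
    (hdist : ddist D (c j) (a x) ≤ 2) (h : ¬ D (c j) (a x)) :
    ∃ i ∈ outB D (c j), i ∉ outB D (a x) := by
  obtain ⟨w, h₁, h₂⟩ := exists_mid_of_ddist_le_two hdist
    (ne_of_apply_ne Sigma.fst (by simp [a, c])) h
  induction w using Vert.cases with
  | ha _ => exact (fst_ne_of_arc hD h₂ rfl).elim
  | hb i => exact ⟨i, mem_outB.2 h₁, fun h => hD.asymm h₂ (mem_outB.1 h)⟩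
  | hc _ => exact (fst_ne_of_arc hD h₁ rfl).elim

theorem b_reach_c (hD : IsOrientation (Ktri 2 p q) D) {i : Fin p} {j : Fin q}
    (hdist : ddist D (b i) (c j) ≤ 2) (h : i ∈ outB D (c j)) :
    ∃ x, ¬ D (c j) (a x) ∧ i ∉ outB D (a x) := by
  obtain ⟨w, h₁, h₂⟩ := exists_mid_of_ddist_le_two hdist
    (ne_of_apply_ne Sigma.fst (by simp [b, c])) (hD.asymm (mem_outB.1 h))
  induction w using Vert.cases with
  | ha x => exact ⟨x, hD.asymm h₂, fun h => hD.asymm h₁ (mem_outB.1 h)⟩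
  | hb _ => exact (fst_ne_of_arc hD h₁ rfl).elim
  | hc _ => exact (fst_ne_of_arc hD h₂ rfl).elim

theorem c_reach_b (hD : IsOrientation (Ktri 2 p q) D) {i : Fin p} {j : Fin q}
    (hdist : ddist D (c j) (b i) ≤ 2) (h : i ∉ outB D (c j)) :
    ∃ x, D (c j) (a x) ∧ i ∈ outB D (a x) := by
  obtain ⟨w, h₁, h₂⟩ := exists_mid_of_ddist_le_two hdist
    (ne_of_apply_ne Sigma.fst (by simp [b, c])) (mt mem_outB.2 h)
  induction w using Vert.cases with
  | ha x => exact ⟨x, h₁, mem_outB.2 h₂⟩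
  | hb _ => exact (fst_ne_of_arc hD h₂ rfl).elim
  | hc _ => exact (fst_ne_of_arc hD h₁ rfl).elim

theorem isDiamTwoProfile (hD : IsOrientation (Ktri 2 p q) D)
    (h2 : ∀ u v, ddist D u v ≤ 2) :
    IsDiamTwoProfile (outB D (a 0)) (outB D (a 1)) (fun j => D (c j) (a 0))
      (fun j => D (c j) (a 1)) (fun j => outB D (c j)) where
  c_reach_c _ _ hne := (c_reach_c hD (h2 _ _) hne).imp_right fun h => by
    simpa only [Fin.exists_fin_two] using h
  a₀_reach_c _ := a_reach_c hD (h2 _ _)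
  a₁_reach_c _ := a_reach_c hD (h2 _ _)
  c_reach_a₀ _ := c_reach_a hD (h2 _ _)
  c_reach_a₁ _ := c_reach_a hD (h2 _ _)
  b_reach_c _ _ hi := by simpa only [Fin.exists_fin_two] using b_reach_c hD (h2 _ _) hi
  c_reach_b _ _ hi := by simpa only [Fin.exists_fin_two] using c_reach_b hD (h2 _ _) hi

theorem le_choose_half (hp : 2 ≤ p) (hD : IsOrientation (Ktri 2 p q) D)
    (h2 : ∀ u v, ddist D u v ≤ 2) : q ≤ p.choose (p / 2) := by
  simpa using (isDiamTwoProfile hD h2).card_le (by simpa using hp)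

end Extraction

section Construction

def orient (f : Fin q → Finset (Fin p)) : Vert p q → Vert p q → Prop
  | ⟨0, x⟩, ⟨1, _⟩ => x.val = 0
  | ⟨1, _⟩, ⟨0, x⟩ => x.val = 1
  | ⟨0, x⟩, ⟨2, _⟩ => x.val = 1
  | ⟨2, _⟩, ⟨0, x⟩ => x.val = 0
  | ⟨2, j⟩, ⟨1, i⟩ => i ∈ f j
  | ⟨1, i⟩, ⟨2, j⟩ => i ∉ f j
  | _, _ => False

theorem isOrientation_orient (f : Fin q → Finset (Fin p)) :
    IsOrientation (Ktri 2 p q) (orient f) := by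
  have hA : ∀ x : Fin 2, (x.val = 0 ↔ ¬ x.val = 1) ∧ (x.val = 1 ↔ ¬ x.val = 0) := by decide
  refine ⟨fun u v huv => ?_, fun u v huv => ?_⟩ <;>
    induction u using Vert.cases <;> induction v using Vert.cases
  all_goals first
    | exact huv.elim
    | exact (huv rfl).elim
    | exact fun h => absurd (Fin.val_eq_of_eq h) (by simp [a, b, c])
    | exact (hA _).1
    | exact (hA _).2
    | exact Iff.rfl
    | exact not_not.symm

variable {f : Fin q → Finset (Fin p)}

theorem ddist_orient_a_le_two [Nontrivial (Fin p)] [Nontrivial (Fin q)]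
    (hf : IsSeparatingAntichain f) (x : Fin 2) (v : Vert p q) : ddist (orient f) (a x) v ≤ 2 := by
  rw [ddist_le_two_iff]
  induction v using Vert.cases with
  | ha y =>
    fin_cases x <;> fin_cases y
    exacts [.inl rfl, .inr (.inr ⟨b (Classical.arbitrary _), rfl, rfl⟩),
      .inr (.inr ⟨c (Classical.arbitrary _), rfl, rfl⟩), .inl rfl]
  | hb i =>
    fin_cases x
    · exact .inr (.inl rfl)
    · obtain ⟨j, hj⟩ := hf.exists_mem_index i
      exact .inr (.inr ⟨c j, rfl, hj⟩)
  | hc j =>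
    fin_cases x
    · obtain ⟨i, hi⟩ := hf.exists_notMem j
      exact .inr (.inr ⟨b i, rfl, hi⟩)
    · exact .inr (.inl rfl)

theorem ddist_orient_b_le_two [Nontrivial (Fin p)] (hf : IsSeparatingAntichain f) (i : Fin p)
    (v : Vert p q) : ddist (orient f) (b i) v ≤ 2 := by
  rw [ddist_le_two_iff]
  induction v using Vert.cases with
  | ha y =>
    fin_cases y
    · obtain ⟨j, hj⟩ := hf.exists_notMem_index i
      exact .inr (.inr ⟨c j, hj, rfl⟩)
    · exact .inr (.inl rfl)
  | hb i' =>
    rcases eq_or_ne i i' with rfl | hii'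
    · exact .inl rfl
    · obtain ⟨j, hi', hi⟩ := hf.separates i i' hii'
      exact .inr (.inr ⟨c j, hi, hi'⟩)
  | hc j => exact .inr (.inr ⟨a 1, rfl, rfl⟩)

theorem ddist_orient_c_le_two [Nontrivial (Fin q)] (hf : IsSeparatingAntichain f) (j : Fin q)
    (v : Vert p q) : ddist (orient f) (c j) v ≤ 2 := by
  rw [ddist_le_two_iff]
  induction v using Vert.cases with
  | ha y =>
    fin_cases y
    · exact .inr (.inl rfl)
    · obtain ⟨i, hi⟩ := hf.exists_mem j
      exact .inr (.inr ⟨b i, hi, rfl⟩)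
  | hb i => exact .inr (.inr ⟨a 0, rfl, rfl⟩)
  | hc j' =>
    rcases eq_or_ne j j' with rfl | hjj'
    · exact .inl rfl
    · obtain ⟨i, hi, hi'⟩ := not_subset.1 (mt (hf.eq_of_subset j j') hjj')
      exact .inr (.inr ⟨b i, hi, hi'⟩)

theorem ddist_orient_le_two [Nontrivial (Fin p)] [Nontrivial (Fin q)]
    (hf : IsSeparatingAntichain f) (u v : Vert p q) : ddist (orient f) u v ≤ 2 := by
  induction u using Vert.cases with
  | ha x => exact ddist_orient_a_le_two hf x v
  | hb i => exact ddist_orient_b_le_two hf i v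
  | hc j => exact ddist_orient_c_le_two hf j v

end Construction

end K2pq

/-- For `q ≥ p ≥ 2`, the orientation number of `K(2,p,q)` is 2 iff `q ≤ C(p, ⌊p/2⌋)`. -/
theorem K2pq_orientation_number_eq_two_iff (p q : ℕ) (hp : 2 ≤ p) (hpq : p ≤ q) :
    orientationNumber (Ktri 2 p q) = 2 ↔ q ≤ p.choose (p / 2) := by
  rw [orientationNumber_eq_two_iff K2pq.a_zero_ne_a_one K2pq.not_adj_a_zero_a_one]
  constructor
  · rintro ⟨D, hD, h2⟩
    exact K2pq.le_choose_half hp hD h2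
  · intro hq
    obtain ⟨f, hf⟩ := exists_separating_antichain (k := p / 2) (by omega) (by omega) hpq hq
    have : Nontrivial (Fin p) := Fin.nontrivial_iff_two_le.2 hp
    have : Nontrivial (Fin q) := Fin.nontrivial_iff_two_le.2 (hp.trans hpq)
    exact ⟨K2pq.orient f, K2pq.isOrientation_orient f, K2pq.ddist_orient_le_two hf⟩
end

section
/- For every even integer p ≥ 4, Φ*(p,2) = C(2p,p) − 8·C(3p/2, p) + 12·C(p, p/2) − 6. -/
open Finset

/-- `Φ*(p,d)` (for `p = k·d`): the sum over tuples `(x_1,…,x_{2d})` with `Σ x_i = p` and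
`1 ≤ x_i ≤ k−1` of `Π C(k, x_i)`. -/
def PhiStar (k d p : ℕ) : ℕ :=
  ∑ x ∈ (Finset.Nat.antidiagonalTuple (2 * d) p).filter
      (fun x => ∀ i, 1 ≤ x i ∧ x i ≤ k - 1),
    ∏ i, k.choose (x i)

/-- `Φ(p,d,[i,j])` (for `p = k·d`): sum over disjoint index sets `S, T` of sizes `i, j`
and tuples summing to `p` with `x_r = 0` on `S`, `x_r = k` on `T` and `1 ≤ x_r ≤ k−1`
otherwise, of `Π C(k, x_r)`. -/
def Phi (k d p i j : ℕ) : ℕ :=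
  ∑ S ∈ (Finset.univ : Finset (Fin (2 * d))).powersetCard i,
    ∑ T ∈ ((Finset.univ : Finset (Fin (2 * d))) \ S).powersetCard j,
      ∑ x ∈ (Finset.Nat.antidiagonalTuple (2 * d) p).filter
          (fun x => (∀ r ∈ S, x r = 0) ∧ (∀ r ∈ T, x r = k) ∧
            ∀ r, r ∉ S → r ∉ T → 1 ≤ x r ∧ x r ≤ k - 1),
        ∏ r, k.choose (x r)

/-!
Write `ψ = (1 + X)^k - (1 + X^k) = ∑_{0<j<k} C(k,j) X^j`. Each coordinate `x_i` of a tuple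
contributes the coefficient `C(k, x_i)` of `X^{x_i}` in `ψ`, so `Φ*(2k,2)` is the coefficient of
`X^{2k}` in `ψ^4`. The binomial theorem, applied once to `ψ^4` and once to each power of
`1 + X^k`, writes this coefficient as a finite combination of binomial coefficients
`C(mk, 2k - ik)`, which evaluates to the stated formula.
-/

open Polynomial

theorem Polynomial.coeff_prod_eq_sum_antidiagonalTuple {R : Type*} [CommSemiring R] {m : ℕ}
    (f : Fin m → R[X]) (n : ℕ) :
    (∏ i, f i).coeff n =
      ∑ x ∈ Finset.Nat.antidiagonalTuple m n, ∏ i, (f i).coeff (x i) := by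
  rw [← coeff_coe, ← coeToPowerSeries.ringHom_apply, map_prod, PowerSeries.coeff_prod]
  refine sum_nbij' (⇑) Finsupp.equivFunOnFinite.symm ?_ ?_ ?_ ?_ ?_ <;>
    simp [Finset.Nat.mem_antidiagonalTuple]

theorem Polynomial.coeff_one_add_X_pow_mul_one_add_X_pow_pow {R : Type*} [CommSemiring R]
    (a b k n : ℕ) :
    ((1 + X : R[X]) ^ a * (1 + X ^ k) ^ b).coeff n =
      ∑ i ∈ range (b + 1),
        (b.choose i : R) * if i * k ≤ n then (a.choose (n - i * k) : R) else 0 := by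
  rw [add_comm 1 (X ^ k : R[X]), add_pow (X ^ k), mul_sum, finsetSum_coeff]
  refine sum_congr rfl fun i _ => ?_
  rw [one_pow, mul_one, ← pow_mul, ← mul_assoc, coeff_mul_natCast, coeff_mul_X_pow',
    coeff_one_add_X_pow, mul_comm, mul_comm k]

section innerBinomial

variable (R : Type*) [CommRing R]

noncomputable def innerBinomial (k : ℕ) : R[X] := (1 + X) ^ k - (1 + X ^ k)

variable {R}

theorem coeff_innerBinomial {k : ℕ} (hk : 0 < k) (j : ℕ) :
    (innerBinomial R k).coeff j = if 1 ≤ j ∧ j ≤ k - 1 then (k.choose j : R) else 0 := by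
  simp only [innerBinomial, coeff_sub, coeff_add, coeff_one_add_X_pow, coeff_one, coeff_X_pow]
  rcases Nat.lt_trichotomy j k with h | rfl | h
  · rcases j.eq_zero_or_pos with rfl | hj
    · simp [hk.ne]
    · simp [hj.ne', h.ne, Nat.one_le_iff_ne_zero.mpr hj.ne', Nat.le_sub_one_of_lt h]
  · simp [hk.ne', hk]
  · simp [Nat.choose_eq_zero_of_lt h, h.ne', (hk.trans h).ne', show ¬ j ≤ k - 1 by omega]

theorem innerBinomial_pow (k n : ℕ) :
    innerBinomial R k ^ n = ∑ m ∈ range (n + 1),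
      C ((-1 : R) ^ (n - m) * n.choose m) * ((1 + X) ^ (k * m) * (1 + X ^ k) ^ (n - m)) := by
  rw [innerBinomial, sub_eq_add_neg, add_pow]
  refine sum_congr rfl fun m _ => ?_
  rw [neg_pow, pow_mul]
  simp only [map_mul, map_pow, map_neg, map_one, map_natCast]
  ring

theorem PhiStar_eq_coeff_innerBinomial_pow {k : ℕ} (hk : 0 < k) (d p : ℕ) :
    (PhiStar k d p : R) = (innerBinomial R k ^ (2 * d)).coeff p := by
  rw [PhiStar, ← Fin.prod_const, coeff_prod_eq_sum_antidiagonalTuple, Nat.cast_sum, sum_filter]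
  refine sum_congr rfl fun x _ => ?_
  split_ifs with hx
  · push_cast
    exact prod_congr rfl fun i _ => by rw [coeff_innerBinomial hk, if_pos (hx i)]
  · obtain ⟨i, hi⟩ := not_forall.mp hx
    exact (prod_eq_zero (mem_univ i) (by rw [coeff_innerBinomial hk, if_neg hi])).symm

theorem coeff_innerBinomial_pow_four {k : ℕ} (hk : 0 < k) :
    (innerBinomial R k ^ 4).coeff (2 * k) =
      ((4 * k).choose (2 * k) : R) - 8 * (3 * k).choose k + 12 * (2 * k).choose k - 6 := by
  rw [innerBinomial_pow, finsetSum_coeff]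
  simp only [coeff_C_mul, coeff_one_add_X_pow_mul_one_add_X_pow_pow, sum_range_succ,
    sum_range_zero, Nat.mul_le_mul_right_iff hk]
  norm_num [show 2 * k - k = k by omega, Nat.choose_eq_zero_of_lt (show k < 2 * k by omega),
    Nat.choose_eq_zero_of_lt (show 0 < 2 * k by omega), Nat.choose_eq_zero_of_lt hk, mul_comm k,
    Nat.choose_symm_of_eq_add (show 3 * k = 2 * k + k by ring), Nat.choose]
  ring

end innerBinomial

/-- For even `p ≥ 4`: `Φ*(p,2) = C(2p,p) − 8·C(3p/2,p) + 12·C(p,p/2) − 6`.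
Here `k = p/2` and `d = 2`. -/
theorem PhiStar_two (p : ℕ) (hp : 4 ≤ p) (hev : Even p) :
    (PhiStar (p / 2) 2 p : ℤ) =
      (2 * p).choose p - 8 * (3 * p / 2).choose p + 12 * p.choose (p / 2) - 6 := by
  obtain ⟨k, rfl⟩ := hev
  have hk : 0 < k := by omega
  rw [show (k + k) / 2 = k by omega, show 3 * (k + k) / 2 = 3 * k by omega,
    PhiStar_eq_coeff_innerBinomial_pow hk, show k + k = 2 * k by ring,
    coeff_innerBinomial_pow_four hk, show 2 * (2 * k) = 4 * k by ring,
    Nat.choose_symm_of_eq_add (show 3 * k = 2 * k + k by ring)]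
end
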